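/- With c, Γ, R defined from the Heisenberg frame as in the context, R 0 i j k = 0 for all i, j, k ∈ {1,2,3,4} (i.e. every curvature component whose first index is 0 and whose remaining three indices are nonzero vanishes); this is the curvature condition R⁻₀ = 0 of the real slice of the Ren–Wang spacetime. -/

import Mathlib

open Finset

/-- Commutation coefficients of the standard frame of the 5-dimensional real
Heisenberg group: the only nonzero ones are `c 1 2 0 = 2`, `c 2 1 0 = −2`,
`c 4 3 0 = 2`, `c 3 4 0 = −2`. -/
def heisC (i j k : Fin 5) : ℝ :=
  if i = 1 ∧ j = 2 ∧ k = 0 then 2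
  else if i = 2 ∧ j = 1 ∧ k = 0 then -2
  else if i = 4 ∧ j = 3 ∧ k = 0 then 2
  else if i = 3 ∧ j = 4 ∧ k = 0 then -2
  else 0

/-- Christoffel symbols `Γ k i j = ½(c k j i + c k i j + c i j k)`. -/
noncomputable def heisGamma (k i j : Fin 5) : ℝ :=
  (1 / 2) * (heisC k j i + heisC k i j + heisC i j k)

/-- Curvature components
`R l k i j = Σ_m (Γ m j k·Γ l i m − Γ m i k·Γ l j m) − Σ_m c i j m·Γ l m k`. -/
noncomputable def heisR (l k i j : Fin 5) : ℝ :=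
  (∑ m : Fin 5, (heisGamma m j k * heisGamma l i m - heisGamma m i k * heisGamma l j m))
    - ∑ m : Fin 5, heisC i j m * heisGamma l m k

/-- Ricci tensor `Ric i j = Σ_k R i k j k`. -/
noncomputable def heisRic (i j : Fin 5) : ℝ := ∑ k : Fin 5, heisR i k j k

/-! The structure constant `c i j k` vanishes unless `k = 0` and `i, j ≠ 0`; hence `Γ k i j`
vanishes unless exactly one of its indices is `0`. In `R 0 i j k` with `i, j, k ≠ 0`, every
product then contains a factor `Γ` with none or two of its indices equal to `0`, or a factor
`c j k m` with `m ≠ 0`. -/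

lemma heisC_eq_zero_of_ne_zero {k : Fin 5} (hk : k ≠ 0) (i j : Fin 5) : heisC i j k = 0 := by
  simp [heisC, hk]

lemma heisC_zero_left (j k : Fin 5) : heisC 0 j k = 0 := by
  simp [heisC]

lemma heisC_zero_mid (i k : Fin 5) : heisC i 0 k = 0 := by
  simp [heisC]

lemma heisGamma_eq_zero_of_ne_zero {k i j : Fin 5} (hk : k ≠ 0) (hi : i ≠ 0) (hj : j ≠ 0) :
    heisGamma k i j = 0 := by
  simp [heisGamma, heisC_eq_zero_of_ne_zero, hk, hi, hj]

lemma heisGamma_zero_zero_left (j : Fin 5) : heisGamma 0 0 j = 0 := by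
  simp [heisGamma, heisC_zero_left]

lemma heisGamma_zero_left_zero (i : Fin 5) : heisGamma 0 i 0 = 0 := by
  simp [heisGamma, heisC_zero_left, heisC_zero_mid]

/-- Every curvature component of the Heisenberg frame whose first index is 0
and whose remaining three indices are nonzero vanishes: the curvature
condition `R⁻₀ = 0` of the real slice of the Ren–Wang spacetime. -/
theorem heisenberg_R_zero_minus_vanishes :
    ∀ i j k : Fin 5, i ≠ 0 → j ≠ 0 → k ≠ 0 → heisR 0 i j k = 0 := by
  intro i j k hi hj hk
  have quadratic_part : ∑ m : Fin 5,
      (heisGamma m k i * heisGamma 0 j m - heisGamma m j i * heisGamma 0 k m) = 0 := by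
    simp [Fin.sum_univ_succ, heisGamma_zero_left_zero, heisGamma_eq_zero_of_ne_zero,
      Fin.succ_ne_zero, hi, hj, hk]
  have bracket_part : ∑ m : Fin 5, heisC j k m * heisGamma 0 m i = 0 := by
    simp [Fin.sum_univ_succ, heisGamma_zero_zero_left, heisC_eq_zero_of_ne_zero, Fin.succ_ne_zero]
  rw [heisR, quadratic_part, bracket_part, sub_zero]
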